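/- Theorem 9.1. For the dyadic square function S(f)(x) := ( Σ_{I∈𝒟 : x∈I} |⟨f⟩_{I_-} − ⟨f⟩_{I_+}|² )^{1/2}, the following are equivalent: (a) there exists C such that ∫ S(f)(x)² v(x) dx ≤ C ∫ |f|² w^{-1} dx for every measurable f with ∫ |f|² w^{-1} dx < ∞; (b) there exists A such that both the joint A₂ condition ⟨v⟩_I ⟨w⟩_I ≤ A for every I ∈ 𝒟, and the condition (1/|J|) Σ_{I⊆J, I∈𝒟} |⟨w⟩_{I_-} − ⟨w⟩_{I_+}|² ⟨v⟩_I |I| ≤ A ⟨w⟩_J for every J ∈ 𝒟, hold. -/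

import Mathlib

/-!
Necessity: testing the bound on `f = 1_J w` leaves `⟨f⟩_{I₋} - ⟨f⟩_{I₊} = ⟨w⟩_{I₋} - ⟨w⟩_{I₊}`
for every `I ⊆ J`, which is the Carleson condition; testing it on `f = 1_{I±} w` gives
`2 ⟨w⟩_{I±} ⟨v⟩_I ≤ C`, and the two halves add up to the joint `A₂` bound.

Sufficiency: put `m_I = ∫_I w`, `φ_I = ∫_I f` and `E_I = φ_I / m_I`, so that `φ_I² ≤ m_I ∫_I f²/w`
by Cauchy–Schwarz. Then
`⟨f⟩_{I₋} - ⟨f⟩_{I₊} = E_I (⟨w⟩_{I₋} - ⟨w⟩_{I₊}) + (martingale differences of E on I)`.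
The first part is summed by the weighted Carleson embedding theorem
`Σ μ_I E_I² ≤ 4A ∫ f²/w`, proved by induction over finite dyadic trees with the Bellman
function `φ_I² / (m_I + ν_I / A)`, `ν_I` being the Carleson mass inside `I`. The second part is
bounded by `A₂` times the Bessel sum `Σ_I Σ_{J child of I} m_J (E_J - E_I)²`, which telescopes to
at most `∫ f²/w`. Altogether `C = 24 A`.
-/

open MeasureTheory Set
open scoped ENNReal Classical

noncomputable section

/-- The dyadic interval `[k/2^n, (k+1)/2^n)`. -/
def dyad (n k : ℕ) : Set ℝ := Set.Ico ((k : ℝ) / 2 ^ n) (((k : ℝ) + 1) / 2 ^ n)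

/-- The length of a dyadic interval of generation `n`. -/
def dlen (n : ℕ) : ℝ := ((1 : ℝ) / 2) ^ n

/-- The average `⟨u⟩_I` of `u` over the dyadic interval `I = dyad n k`. -/
def davg (u : ℝ → ℝ) (n k : ℕ) : ℝ := (2 : ℝ) ^ n * ∫ x in dyad n k, u x

/-- A weight: integrable on `[0,1)` and a.e. positive there. -/
def IsWeight (u : ℝ → ℝ) : Prop :=
  IntegrableOn u (Set.Ico (0 : ℝ) 1) ∧
    ∀ᵐ x ∂(volume.restrict (Set.Ico (0 : ℝ) 1)), 0 < u x

/-- The square of the dyadic square function: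
`S(f)(x)² = Σ_{I∋x} |⟨f⟩_{I_-} - ⟨f⟩_{I_+}|²`, valued in `ℝ≥0∞`. -/
def Ssq (f : ℝ → ℝ) (x : ℝ) : ℝ≥0∞ :=
  ∑' p : ℕ × ℕ,
    if p.2 < 2 ^ p.1 ∧ x ∈ dyad p.1 p.2 then
      ENNReal.ofReal ((davg f (p.1 + 1) (2 * p.2) - davg f (p.1 + 1) (2 * p.2 + 1)) ^ 2)
    else 0

lemma dyad_zero_zero : dyad 0 0 = Ico (0 : ℝ) 1 := by
  simp [dyad]

lemma measurableSet_dyad (n k : ℕ) : MeasurableSet (dyad n k) :=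
  measurableSet_Ico

lemma volume_dyad_ne_zero (n k : ℕ) : volume (dyad n k) ≠ 0 := by
  rw [dyad, Real.volume_Ico]
  simp only [ne_eq, ENNReal.ofReal_eq_zero, not_le, sub_pos]
  gcongr; linarith

lemma dyad_subset_Ico {n k : ℕ} (hk : k < 2 ^ n) : dyad n k ⊆ Ico (0 : ℝ) 1 := by
  have hk' : (k : ℝ) + 1 ≤ 2 ^ n := by exact_mod_cast hk
  refine Ico_subset_Ico (by positivity) ?_
  rw [div_le_one (by positivity)]
  exact hk'

lemma dyad_subset_of_div_eq {n e i k : ℕ} (h : i / 2 ^ e = k) :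
    dyad (n + e) i ⊆ dyad n k := by
  have hlo : (k : ℝ) * 2 ^ e ≤ i := by exact_mod_cast h ▸ Nat.div_mul_le_self i (2 ^ e)
  have hhi : (i : ℝ) + 1 ≤ 2 ^ e * ((k : ℝ) + 1) := by
    exact_mod_cast h ▸ Nat.lt_mul_div_succ i (by positivity : 0 < 2 ^ e)
  refine Ico_subset_Ico ?_ ?_ <;>
  · rw [div_le_div_iff₀ (by positivity) (by positivity), pow_add]
    nlinarith [pow_pos (zero_lt_two' ℝ) n]

lemma dyad_eq_union (n k : ℕ) :
    dyad n k = dyad (n + 1) (2 * k) ∪ dyad (n + 1) (2 * k + 1) := by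
  have h : ∀ x : ℝ, x / 2 ^ n = 2 * x / 2 ^ (n + 1) := fun x => by
    rw [pow_succ]; field_simp
  simp only [dyad]
  push_cast
  rw [h k, h (k + 1), show 2 * ((k : ℝ) + 1) = 2 * k + 1 + 1 by ring,
    Ico_union_Ico_eq_Ico (by gcongr; linarith) (by gcongr; linarith)]

lemma dyad_left_subset (n k : ℕ) : dyad (n + 1) (2 * k) ⊆ dyad n k := by
  rw [dyad_eq_union n k]
  exact subset_union_left

lemma dyad_right_subset (n k : ℕ) : dyad (n + 1) (2 * k + 1) ⊆ dyad n k := by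
  rw [dyad_eq_union n k]
  exact subset_union_right

lemma disjoint_dyad_halves (n k : ℕ) :
    Disjoint (dyad (n + 1) (2 * k)) (dyad (n + 1) (2 * k + 1)) := by
  simp only [dyad]
  push_cast
  exact Ico_disjoint_Ico_same

lemma lt_two_pow_of_dyad_subset {n k m j : ℕ} (hj : j < 2 ^ m) (h : dyad n k ⊆ dyad m j) :
    k < 2 ^ n := by
  have hmem : (k : ℝ) / 2 ^ n ∈ dyad n k := ⟨le_rfl, by gcongr; linarith⟩
  have := (dyad_subset_Ico hj (h hmem)).2
  rw [div_lt_one (by positivity)] at this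
  exact_mod_cast this

lemma two_mul_mul_abs_le (t y : ℝ) {W : ℝ} (hW : 0 < W) :
    2 * t * |y| ≤ t ^ 2 * (y ^ 2 / W) + W := by
  have h : t ^ 2 * (y ^ 2 / W) + W - 2 * t * |y| = (t * |y| - W) ^ 2 / W := by
    field_simp
    linear_combination (-t ^ 2) * sq_abs y
  nlinarith [div_nonneg (sq_nonneg (t * |y| - W)) hW.le]

lemma sq_le_mul_of_forall_two_mul_le {a F m : ℝ} (hF : 0 ≤ F) (hm : 0 ≤ m)
    (h : ∀ t : ℝ, 0 < t → 2 * t * |a| ≤ t ^ 2 * F + m) : a ^ 2 ≤ F * m := by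
  rcases (abs_nonneg a).eq_or_lt with ha | ha
  · rw [← sq_abs, ← ha, sq, zero_mul]; positivity
  rcases hF.eq_or_lt with hF0 | hFpos
  · have := h ((m + 1) / (2 * |a|)) (by positivity)
    have e : 2 * ((m + 1) / (2 * |a|)) * |a| = m + 1 := by field_simp
    rw [e, ← hF0] at this
    linarith
  · have := h (|a| / F) (by positivity)
    have e1 : 2 * (|a| / F) * |a| = 2 * (a ^ 2 / F) := by rw [← sq_abs a]; ring
    have e2 : (|a| / F) ^ 2 * F = a ^ 2 / F := by rw [div_pow, sq_abs]; field_simp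
    rw [e1, e2] at this
    rw [mul_comm, ← div_le_iff₀ hFpos]
    linarith

section WeightedCauchySchwarz

variable {α : Type*} [MeasurableSpace α] {μ : Measure α} {f w : α → ℝ}

lemma integrable_of_integrable_sq_div (hfm : AEStronglyMeasurable f μ) (hw : Integrable w μ)
    (hpos : ∀ᵐ x ∂μ, 0 < w x) (hf : Integrable (fun x => f x ^ 2 / w x) μ) :
    Integrable f μ := by
  refine Integrable.mono' ((hf.add hw).div_const 2) hfm (hpos.mono fun x hx => ?_)
  have := two_mul_mul_abs_le 1 (f x) hx
  simp only [Pi.add_apply, Real.norm_eq_abs]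
  linarith

lemma sq_integral_le_integral_sq_div_mul (hfm : AEStronglyMeasurable f μ) (hw : Integrable w μ)
    (hpos : ∀ᵐ x ∂μ, 0 < w x) (hf : Integrable (fun x => f x ^ 2 / w x) μ) :
    (∫ x, f x ∂μ) ^ 2 ≤ (∫ x, f x ^ 2 / w x ∂μ) * ∫ x, w x ∂μ := by
  refine sq_le_mul_of_forall_two_mul_le
    (integral_nonneg_of_ae (hpos.mono fun x hx => by positivity))
    (integral_nonneg_of_ae (hpos.mono fun x hx => hx.le)) fun t ht => ?_
  calc 2 * t * |∫ x, f x ∂μ| ≤ ∫ x, 2 * t * |f x| ∂μ := by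
        rw [integral_const_mul]
        gcongr
        exact abs_integral_le_integral_abs
    _ ≤ ∫ x, t ^ 2 * (f x ^ 2 / w x) + w x ∂μ :=
        integral_mono_ae ((integrable_of_integrable_sq_div hfm hw hpos hf).abs.const_mul _)
          ((hf.const_mul _).add hw) (hpos.mono fun x hx => two_mul_mul_abs_le t (f x) hx)
    _ = t ^ 2 * ∫ x, f x ^ 2 / w x ∂μ + ∫ x, w x ∂μ := by
        rw [integral_add (hf.const_mul _) hw, integral_const_mul]

lemma setIntegral_pos_of_ae_pos {s : Set α} (hs : μ s ≠ 0) (hw : IntegrableOn w s μ)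
    (hpos : ∀ᵐ x ∂μ.restrict s, 0 < w x) : 0 < ∫ x in s, w x ∂μ := by
  rw [integral_pos_iff_support_of_nonneg_ae (hpos.mono fun x hx => hx.le) hw]
  have hsupp : Function.support w =ᵐ[μ.restrict s] univ :=
    ae_eq_univ.mpr (ae_iff.mp (hpos.mono fun x hx => hx.ne'))
  rw [measure_congr hsupp, Measure.restrict_apply_univ]
  exact pos_iff_ne_zero.mpr hs

end WeightedCauchySchwarz

lemma two_mul_lt_two_pow_succ {n k : ℕ} (hk : k < 2 ^ n) : 2 * k < 2 ^ (n + 1) := by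
  rw [pow_succ]; omega

lemma two_mul_add_one_lt_two_pow_succ {n k : ℕ} (hk : k < 2 ^ n) :
    2 * k + 1 < 2 ^ (n + 1) := by
  rw [pow_succ]; omega

def dint (u : ℝ → ℝ) (n k : ℕ) : ℝ := ∫ x in dyad n k, u x

def IsDyadicAdditive (u : ℕ → ℕ → ℝ) : Prop :=
  ∀ n k, k < 2 ^ n → u n k = u (n + 1) (2 * k) + u (n + 1) (2 * k + 1)

lemma davg_eq_two_pow_mul_dint (u : ℝ → ℝ) (n k : ℕ) : davg u n k = 2 ^ n * dint u n k := rfl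

lemma davg_mul_dlen (u : ℝ → ℝ) (n k : ℕ) : davg u n k * dlen n = dint u n k := by
  rw [davg_eq_two_pow_mul_dint, dlen, mul_comm, ← mul_assoc, ← mul_pow]
  norm_num

section DyadicIntegrals

variable {u w : ℝ → ℝ}

lemma integrableOn_dyad (hu : IntegrableOn u (Ico 0 1)) {n k : ℕ} (hk : k < 2 ^ n) :
    IntegrableOn u (dyad n k) :=
  hu.mono_set (dyad_subset_Ico hk)

lemma isDyadicAdditive_dint (hu : IntegrableOn u (Ico 0 1)) : IsDyadicAdditive (dint u) :=
  fun n k hk => by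
    rw [dint, dyad_eq_union n k]
    exact setIntegral_union (disjoint_dyad_halves n k) (measurableSet_dyad _ _)
      (integrableOn_dyad hu (two_mul_lt_two_pow_succ hk))
      (integrableOn_dyad hu (two_mul_add_one_lt_two_pow_succ hk))

lemma IsWeight.ae_pos_dyad (hw : IsWeight w) {n k : ℕ} (hk : k < 2 ^ n) :
    ∀ᵐ x ∂volume.restrict (dyad n k), 0 < w x :=
  ae_restrict_of_ae_restrict_of_subset (dyad_subset_Ico hk) hw.2

lemma IsWeight.dint_pos (hw : IsWeight w) {n k : ℕ} (hk : k < 2 ^ n) : 0 < dint w n k :=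
  setIntegral_pos_of_ae_pos (volume_dyad_ne_zero n k) (integrableOn_dyad hw.1 hk)
    (hw.ae_pos_dyad hk)

lemma IsWeight.davg_pos (hw : IsWeight w) {n k : ℕ} (hk : k < 2 ^ n) : 0 < davg w n k := by
  rw [davg_eq_two_pow_mul_dint]
  exact mul_pos (by positivity) (hw.dint_pos hk)

lemma sq_dint_le (hw : IsWeight w) {f : ℝ → ℝ} (hf : Measurable f)
    (hfw : IntegrableOn (fun x => f x ^ 2 / w x) (Ico 0 1)) {n k : ℕ} (hk : k < 2 ^ n) :
    dint f n k ^ 2 ≤ dint (fun x => f x ^ 2 / w x) n k * dint w n k :=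
  sq_integral_le_integral_sq_div_mul hf.aestronglyMeasurable (integrableOn_dyad hw.1 hk)
    (hw.ae_pos_dyad hk) (integrableOn_dyad hfw hk)

end DyadicIntegrals

def dyadicTree : ℕ → ℕ → ℕ → Finset (ℕ × ℕ)
  | 0, _, _ => ∅
  | d + 1, n, k =>
    insert (n, k) (dyadicTree d (n + 1) (2 * k) ∪ dyadicTree d (n + 1) (2 * k + 1))

lemma mem_dyadicTree {d n k : ℕ} {p : ℕ × ℕ} :
    p ∈ dyadicTree d n k ↔ n ≤ p.1 ∧ p.1 < n + d ∧ p.2 / 2 ^ (p.1 - n) = k := by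
  induction d generalizing n k with
  | zero => simp [dyadicTree]; omega
  | succ d ih =>
    obtain ⟨a, b⟩ := p
    simp only [dyadicTree, Finset.mem_insert, Finset.mem_union, ih, Prod.mk.injEq]
    rcases lt_trichotomy a n with h | rfl | h
    · omega
    · simp
    · obtain ⟨e, rfl⟩ := Nat.exists_eq_add_of_lt h
      rw [show n + e + 1 - n = e + 1 by omega, show n + e + 1 - (n + 1) = e by omega, pow_succ,
        ← Nat.div_div_eq_div_mul]
      omega

lemma sum_dyadicTree_succ {M : Type*} [AddCommMonoid M] (g : ℕ × ℕ → M) (d n k : ℕ) :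
    ∑ p ∈ dyadicTree (d + 1) n k, g p =
      g (n, k) + (∑ p ∈ dyadicTree d (n + 1) (2 * k), g p +
        ∑ p ∈ dyadicTree d (n + 1) (2 * k + 1), g p) := by
  rw [dyadicTree, Finset.sum_insert, Finset.sum_union]
  · rw [Finset.disjoint_left]
    intro p h1 h2
    rw [mem_dyadicTree] at h1 h2
    omega
  · simp only [Finset.mem_union, mem_dyadicTree]
    omega

lemma lt_two_pow_of_mem_dyadicTree {d n k : ℕ} (hk : k < 2 ^ n) {p : ℕ × ℕ}
    (hp : p ∈ dyadicTree d n k) : p.2 < 2 ^ p.1 := by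
  obtain ⟨h1, -, h3⟩ := mem_dyadicTree.mp hp
  have := Nat.lt_mul_div_succ p.2 (by positivity : 0 < 2 ^ (p.1 - n))
  rw [h3] at this
  calc p.2 < 2 ^ (p.1 - n) * (k + 1) := this
    _ ≤ 2 ^ (p.1 - n) * 2 ^ n := by gcongr; omega
    _ = 2 ^ p.1 := by rw [← pow_add, Nat.sub_add_cancel h1]

lemma dyad_subset_of_mem_dyadicTree {d n k : ℕ} {p : ℕ × ℕ} (hp : p ∈ dyadicTree d n k) :
    dyad p.1 p.2 ⊆ dyad n k := by
  obtain ⟨h1, -, h3⟩ := mem_dyadicTree.mp hp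
  have := dyad_subset_of_div_eq (n := n) h3
  rwa [Nat.add_sub_cancel' h1] at this

lemma mem_dyadicTree_zero_zero {d : ℕ} {p : ℕ × ℕ} (hp : p.2 < 2 ^ p.1) (hd : p.1 < d) :
    p ∈ dyadicTree d 0 0 := by
  rw [mem_dyadicTree, Nat.sub_zero, Nat.div_eq_zero_iff_lt (by positivity)]
  omega

lemma sq_add_div_add_le {a b s t : ℝ} (hs : 0 < s) (ht : 0 < t) :
    (a + b) ^ 2 / (s + t) ≤ a ^ 2 / s + b ^ 2 / t := by
  simpa [Fin.sum_univ_two] using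
    Finset.sq_sum_div_le_sum_sq_div Finset.univ ![a, b] (g := ![s, t]) (by simp [hs, ht])

/-- The Bellman step of the Carleson embedding: adding the mass `u` at the top of a box of
weight `m` that already holds the mass `r` lowers `φ² / (m + ·)` by at least `u (φ / m)² / 4`,
as long as the box is not overfull. -/
lemma mul_div_sq_le_four_mul_sub {φ m u r : ℝ} (hm : 0 < m) (hu : 0 ≤ u) (hr : 0 ≤ r)
    (hur : u + r ≤ m) :
    u * (φ / m) ^ 2 ≤ 4 * (φ ^ 2 / (m + r) - φ ^ 2 / (m + (u + r))) := by
  have hsub : φ ^ 2 / (m + r) - φ ^ 2 / (m + (u + r)) =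
      u * φ ^ 2 / ((m + r) * (m + (u + r))) := by
    field_simp; ring
  have hden : (m + r) * (m + (u + r)) ≤ 4 * m ^ 2 := by nlinarith
  rw [hsub, div_pow, mul_div_assoc', ← mul_div_assoc,
    div_le_div_iff₀ (by positivity) (by positivity)]
  nlinarith [mul_le_mul_of_nonneg_left hden (mul_nonneg hu (sq_nonneg φ))]

lemma sum_dyadicTree_nonneg {g : ℕ → ℕ → ℝ} (hg : ∀ n k, k < 2 ^ n → 0 ≤ g n k) (d : ℕ)
    {n k : ℕ} (hk : k < 2 ^ n) : 0 ≤ ∑ p ∈ dyadicTree d n k, g p.1 p.2 :=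
  Finset.sum_nonneg fun p hp => hg p.1 p.2 (lt_two_pow_of_mem_dyadicTree hk hp)

/-- Models the dyadic integrals `m_I = ∫_I w`, `φ_I = ∫_I f`, `F_I = ∫_I f²/w` of a weight `w`
and of `f ∈ L²(w⁻¹)`. -/
structure IsDyadicL2Data (m φ F : ℕ → ℕ → ℝ) : Prop where
  pos : ∀ n k, k < 2 ^ n → 0 < m n k
  additive_m : IsDyadicAdditive m
  additive_φ : IsDyadicAdditive φ
  additive_F : IsDyadicAdditive F
  sq_le : ∀ n k, k < 2 ^ n → φ n k ^ 2 ≤ F n k * m n k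

section TreeInequalities

variable {m φ F μ : ℕ → ℕ → ℝ}

lemma IsDyadicL2Data.sq_div_le (h : IsDyadicL2Data m φ F) {n k : ℕ} (hk : k < 2 ^ n) :
    φ n k ^ 2 / m n k ≤ F n k :=
  (div_le_iff₀ (h.pos n k hk)).mpr (h.sq_le n k hk)

def besselTerm (m φ : ℕ → ℕ → ℝ) (n k : ℕ) : ℝ :=
  m (n + 1) (2 * k) * (φ (n + 1) (2 * k) / m (n + 1) (2 * k) - φ n k / m n k) ^ 2 +
    m (n + 1) (2 * k + 1) * (φ (n + 1) (2 * k + 1) / m (n + 1) (2 * k + 1) - φ n k / m n k) ^ 2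

lemma besselTerm_eq (hm : ∀ n k, k < 2 ^ n → 0 < m n k) (hmA : IsDyadicAdditive m)
    (hφA : IsDyadicAdditive φ) {n k : ℕ} (hk : k < 2 ^ n) :
    besselTerm m φ n k = φ (n + 1) (2 * k) ^ 2 / m (n + 1) (2 * k) +
      φ (n + 1) (2 * k + 1) ^ 2 / m (n + 1) (2 * k + 1) - φ n k ^ 2 / m n k := by
  have hL := hm _ _ (two_mul_lt_two_pow_succ hk)
  have hR := hm _ _ (two_mul_add_one_lt_two_pow_succ hk)
  rw [besselTerm, hmA n k hk, hφA n k hk]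
  field_simp
  ring

lemma sum_bessel_le (h : IsDyadicL2Data m φ F) (d : ℕ) {n k : ℕ} (hk : k < 2 ^ n) :
    ∑ p ∈ dyadicTree d n k, besselTerm m φ p.1 p.2 ≤ F n k - φ n k ^ 2 / m n k := by
  induction d generalizing n k with
  | zero =>
    rw [dyadicTree, Finset.sum_empty, sub_nonneg]
    exact h.sq_div_le hk
  | succ d ih =>
    have hL := ih (two_mul_lt_two_pow_succ hk)
    have hR := ih (two_mul_add_one_lt_two_pow_succ hk)
    rw [sum_dyadicTree_succ, besselTerm_eq h.pos h.additive_m h.additive_φ hk, h.additive_F n k hk]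
    linarith

lemma sum_carleson_le_four_mul_sub (h : IsDyadicL2Data m φ F)
    (hμ : ∀ n k, k < 2 ^ n → 0 ≤ μ n k)
    (hCar : ∀ n k, k < 2 ^ n → ∀ d, ∑ p ∈ dyadicTree d n k, μ p.1 p.2 ≤ m n k)
    (d : ℕ) {n k : ℕ} (hk : k < 2 ^ n) :
    ∑ p ∈ dyadicTree d n k, μ p.1 p.2 * (φ p.1 p.2 / m p.1 p.2) ^ 2 ≤
      4 * (F n k - φ n k ^ 2 / (m n k + ∑ p ∈ dyadicTree d n k, μ p.1 p.2)) := by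
  induction d generalizing n k with
  | zero =>
    have := h.sq_div_le hk
    rw [dyadicTree, Finset.sum_empty, Finset.sum_empty, add_zero]
    linarith
  | succ d ih =>
    have hkL := two_mul_lt_two_pow_succ hk
    have hkR := two_mul_add_one_lt_two_pow_succ hk
    have hνL := sum_dyadicTree_nonneg hμ d hkL
    have hνR := sum_dyadicTree_nonneg hμ d hkR
    have hcar := hCar n k hk (d + 1)
    rw [sum_dyadicTree_succ] at hcar ⊢
    rw [sum_dyadicTree_succ]
    dsimp only at hcar ⊢
    have hconv := sq_add_div_add_le (a := φ (n + 1) (2 * k)) (b := φ (n + 1) (2 * k + 1))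
      (add_pos_of_pos_of_nonneg (h.pos _ _ hkL) hνL)
      (add_pos_of_pos_of_nonneg (h.pos _ _ hkR) hνR)
    rw [← h.additive_φ n k hk, add_add_add_comm, ← h.additive_m n k hk] at hconv
    have hroot := mul_div_sq_le_four_mul_sub (φ := φ n k) (h.pos n k hk) (hμ n k hk)
      (add_nonneg hνL hνR) (by linarith)
    have hL := ih hkL
    have hR := ih hkR
    rw [h.additive_F n k hk]
    linarith

lemma sum_carleson_le {A : ℝ} (hA : 0 < A) (h : IsDyadicL2Data m φ F)
    (hμ : ∀ n k, k < 2 ^ n → 0 ≤ μ n k)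
    (hCar : ∀ n k, k < 2 ^ n → ∀ d, ∑ p ∈ dyadicTree d n k, μ p.1 p.2 ≤ A * m n k)
    (d : ℕ) {n k : ℕ} (hk : k < 2 ^ n) :
    ∑ p ∈ dyadicTree d n k, μ p.1 p.2 * (φ p.1 p.2 / m p.1 p.2) ^ 2 ≤ 4 * A * F n k := by
  have hμA : ∀ n k, k < 2 ^ n → 0 ≤ μ n k / A := fun n k hk => div_nonneg (hμ n k hk) hA.le
  have hCarA : ∀ n k, k < 2 ^ n → ∀ d, ∑ p ∈ dyadicTree d n k, μ p.1 p.2 / A ≤ m n k :=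
    fun n k hk d => by rw [← Finset.sum_div, div_le_iff₀' hA]; exact hCar n k hk d
  have hbound := sum_carleson_le_four_mul_sub h hμA hCarA d hk
  have hpos : 0 ≤ φ n k ^ 2 / (m n k + ∑ p ∈ dyadicTree d n k, μ p.1 p.2 / A) :=
    div_nonneg (sq_nonneg _) (add_nonneg (h.pos n k hk).le (sum_dyadicTree_nonneg hμA d hk))
  calc ∑ p ∈ dyadicTree d n k, μ p.1 p.2 * (φ p.1 p.2 / m p.1 p.2) ^ 2
      = A * ∑ p ∈ dyadicTree d n k, μ p.1 p.2 / A * (φ p.1 p.2 / m p.1 p.2) ^ 2 := by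
        rw [Finset.mul_sum]
        refine Finset.sum_congr rfl fun p _ => ?_
        field_simp
    _ ≤ A * (4 * F n k) := by gcongr; linarith
    _ = 4 * A * F n k := by ring

end TreeInequalities

lemma isDyadicL2Data_dint {w f : ℝ → ℝ} (hw : IsWeight w) (hfm : Measurable f)
    (hfw : IntegrableOn (fun x => f x ^ 2 / w x) (Ico 0 1)) :
    IsDyadicL2Data (dint w) (dint f) (dint fun x => f x ^ 2 / w x) where
  pos _ _ hk := hw.dint_pos hk
  additive_m := isDyadicAdditive_dint hw.1
  additive_φ := isDyadicAdditive_dint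
    (integrable_of_integrable_sq_div hfm.aestronglyMeasurable hw.1 hw.2 hfw)
  additive_F := isDyadicAdditive_dint hfw
  sq_le _ _ hk := sq_dint_le hw hfm hfw hk

def avgDiff (u : ℝ → ℝ) (n k : ℕ) : ℝ := davg u (n + 1) (2 * k) - davg u (n + 1) (2 * k + 1)

lemma avgDiff_eq (u : ℝ → ℝ) (n k : ℕ) :
    avgDiff u n k = 2 ^ (n + 1) * (dint u (n + 1) (2 * k) - dint u (n + 1) (2 * k + 1)) := by
  rw [avgDiff, davg_eq_two_pow_mul_dint, davg_eq_two_pow_mul_dint, mul_sub]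

lemma setLIntegral_Ssq_mul {v : ℝ → ℝ} (hv : IsWeight v) (f : ℝ → ℝ) :
    ∫⁻ x in Ico 0 1, Ssq f x * ENNReal.ofReal (v x) =
      ∑' p : ℕ × ℕ, if p.2 < 2 ^ p.1 then
        ENNReal.ofReal (avgDiff f p.1 p.2 ^ 2 * dint v p.1 p.2) else 0 := by
  have hvm : AEMeasurable (fun x => ENNReal.ofReal (v x)) (volume.restrict (Ico 0 1)) :=
    ENNReal.measurable_ofReal.comp_aemeasurable hv.1.aemeasurable
  simp_rw [Ssq, ← avgDiff.eq_1, ← ENNReal.tsum_mul_right]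
  refine (lintegral_tsum fun p => ?_).trans (tsum_congr fun p => ?_)
  · exact AEMeasurable.mul (Measurable.ite
      ((MeasurableSet.const _).inter (measurableSet_dyad _ _)) measurable_const
      measurable_const).aemeasurable hvm
  split_ifs with hp
  · have hind : ∀ x, (if p.2 < 2 ^ p.1 ∧ x ∈ dyad p.1 p.2 then
          ENNReal.ofReal (avgDiff f p.1 p.2 ^ 2) else 0) * ENNReal.ofReal (v x) =
        (dyad p.1 p.2).indicator
          (fun x => ENNReal.ofReal (avgDiff f p.1 p.2 ^ 2) * ENNReal.ofReal (v x)) x := by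
      intro x
      by_cases hx : x ∈ dyad p.1 p.2 <;> simp [hp, hx]
    rw [lintegral_congr hind, lintegral_indicator (measurableSet_dyad _ _),
      Measure.restrict_restrict (measurableSet_dyad _ _), inter_eq_left.mpr (dyad_subset_Ico hp),
      lintegral_const_mul' _ _ ENNReal.ofReal_ne_top, ENNReal.ofReal_mul (sq_nonneg _), dint,
      ofReal_integral_eq_lintegral_ofReal (integrableOn_dyad hv.1 hp)
        ((hv.ae_pos_dyad hp).mono fun x hx => hx.le)]
  · simp [hp]

def SquareFunctionBound (v w : ℝ → ℝ) (C : ℝ) : Prop :=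
  ∀ f : ℝ → ℝ, Measurable f → IntegrableOn (fun x => f x ^ 2 / w x) (Ico 0 1) →
    ∫⁻ x in Ico 0 1, Ssq f x * ENNReal.ofReal (v x) ≤
      ENNReal.ofReal (C * ∫ x in Ico 0 1, f x ^ 2 / w x)

def JointA2 (v w : ℝ → ℝ) (A : ℝ) : Prop :=
  ∀ n k : ℕ, k < 2 ^ n → davg v n k * davg w n k ≤ A

def CarlesonCondition (v w : ℝ → ℝ) (A : ℝ) : Prop :=
  ∀ m j : ℕ, j < 2 ^ m →
    (∑' p : ℕ × ℕ, if dyad p.1 p.2 ⊆ dyad m j then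
      ENNReal.ofReal (avgDiff w p.1 p.2 ^ 2 * davg v p.1 p.2 * dlen p.1) else 0) ≤
      ENNReal.ofReal (A * davg w m j * dlen m)

section Necessity

variable {v w g : ℝ → ℝ} {C : ℝ}

lemma dint_indicator (hgw : w =ᵐ[volume.restrict (Ico 0 1)] g) (m j : ℕ) {n k : ℕ}
    (hk : k < 2 ^ n) : dint ((dyad m j).indicator g) n k = ∫ x in dyad n k ∩ dyad m j, w x := by
  rw [dint, setIntegral_indicator (measurableSet_dyad m j)]
  exact (integral_congr_ae (ae_restrict_of_ae_restrict_of_subset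
    (inter_subset_left.trans (dyad_subset_Ico hk)) hgw)).symm

/-- The bound tested on `f = 1_J g`; `g` is a measurable representative of `w`, since the bound
is only assumed for measurable `f`. -/
lemma tsum_indicator_le_of_squareFunctionBound (hv : IsWeight v) (hw : IsWeight w)
    (hbd : SquareFunctionBound v w C) (hg : Measurable g)
    (hgw : w =ᵐ[volume.restrict (Ico 0 1)] g) {m j : ℕ} (hj : j < 2 ^ m) :
    (∑' p : ℕ × ℕ, if p.2 < 2 ^ p.1 then
      ENNReal.ofReal (avgDiff ((dyad m j).indicator g) p.1 p.2 ^ 2 * dint v p.1 p.2) else 0) ≤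
      ENNReal.ofReal (C * dint w m j) := by
  have hsq : (fun x => (dyad m j).indicator g x ^ 2 / w x) =ᵐ[volume.restrict (Ico 0 1)]
      (dyad m j).indicator w := by
    filter_upwards [hw.2, hgw] with x hx hxg
    by_cases hxJ : x ∈ dyad m j
    · simp only [indicator_of_mem hxJ, ← hxg]
      field_simp
    · simp [indicator_of_notMem hxJ]
  have hint : IntegrableOn (fun x => (dyad m j).indicator g x ^ 2 / w x) (Ico 0 1) :=
    ((integrableOn_dyad hw.1 hj).integrable_indicator
      (measurableSet_dyad m j)).integrableOn.congr hsq.symm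
  have hval : ∫ x in Ico 0 1, (dyad m j).indicator g x ^ 2 / w x = dint w m j := by
    rw [integral_congr_ae hsq, setIntegral_indicator (measurableSet_dyad m j),
      inter_eq_self_of_subset_right (dyad_subset_Ico hj), dint]
  rw [← setLIntegral_Ssq_mul hv, ← hval]
  exact hbd _ (hg.indicator (measurableSet_dyad m j)) hint

lemma carlesonCondition_of_squareFunctionBound (hv : IsWeight v) (hw : IsWeight w)
    (hbd : SquareFunctionBound v w C) : CarlesonCondition v w C := by
  intro m j hj
  obtain ⟨g, hgm, hgw⟩ := hw.1.aestronglyMeasurable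
  have hg : Measurable g := hgm.measurable
  refine le_trans (ENNReal.tsum_le_tsum fun p => ?_)
    ((tsum_indicator_le_of_squareFunctionBound hv hw hbd hg hgw hj).trans_eq
      (by rw [mul_assoc, davg_mul_dlen]))
  split_ifs with hsub hp hp
  · have hdint : ∀ i, dyad (p.1 + 1) i ⊆ dyad p.1 p.2 → i < 2 ^ (p.1 + 1) →
        dint ((dyad m j).indicator g) (p.1 + 1) i = dint w (p.1 + 1) i := fun i hi hi' => by
      rw [dint_indicator hgw m j hi', inter_eq_left.mpr (hi.trans hsub), dint]
    have hdiff : avgDiff ((dyad m j).indicator g) p.1 p.2 = avgDiff w p.1 p.2 := by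
      rw [avgDiff_eq, avgDiff_eq, hdint _ (dyad_left_subset _ _) (two_mul_lt_two_pow_succ hp),
        hdint _ (dyad_right_subset _ _) (two_mul_add_one_lt_two_pow_succ hp)]
    rw [mul_assoc, davg_mul_dlen, hdiff]
  · exact absurd (lt_two_pow_of_dyad_subset hj hsub) hp
  · exact bot_le
  · exact le_rfl

lemma two_mul_davg_child_mul_davg_le (hv : IsWeight v) (hw : IsWeight w) (hC : 0 ≤ C)
    (hbd : SquareFunctionBound v w C) (hg : Measurable g)
    (hgw : w =ᵐ[volume.restrict (Ico 0 1)] g) {n k i : ℕ} (hk : k < 2 ^ n)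
    (hi : i = 2 * k ∨ i = 2 * k + 1) :
    2 * (davg w (n + 1) i * davg v n k) ≤ C := by
  have hi' : i < 2 ^ (n + 1) := by
    rcases hi with rfl | rfl
    exacts [two_mul_lt_two_pow_succ hk, two_mul_add_one_lt_two_pow_succ hk]
  have hterm := (ENNReal.le_tsum (n, k)).trans
    (tsum_indicator_le_of_squareFunctionBound hv hw hbd hg hgw hi')
  rw [if_pos hk, ENNReal.ofReal_le_ofReal_iff (mul_nonneg hC (hw.dint_pos hi').le)] at hterm
  have hdiff : avgDiff ((dyad (n + 1) i).indicator g) n k ^ 2 =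
      (2 ^ (n + 1) * dint w (n + 1) i) ^ 2 := by
    have hdisj := disjoint_dyad_halves n k
    rw [avgDiff_eq, dint_indicator hgw _ _ (two_mul_lt_two_pow_succ hk),
      dint_indicator hgw _ _ (two_mul_add_one_lt_two_pow_succ hk)]
    rcases hi with rfl | rfl
    · rw [inter_self, hdisj.symm.inter_eq, Measure.restrict_empty, integral_zero_measure,
        sub_zero]
      rfl
    · rw [inter_self, hdisj.inter_eq, Measure.restrict_empty, integral_zero_measure, zero_sub,
        mul_neg, neg_sq]
      rfl
  have hm := hw.dint_pos hi'
  rw [hdiff] at hterm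
  rw [davg_eq_two_pow_mul_dint, davg_eq_two_pow_mul_dint]
  refine le_of_mul_le_mul_left ?_ hm
  calc dint w (n + 1) i * (2 * (2 ^ (n + 1) * dint w (n + 1) i * (2 ^ n * dint v n k)))
      = (2 ^ (n + 1) * dint w (n + 1) i) ^ 2 * dint v n k := by ring
    _ ≤ C * dint w (n + 1) i := hterm
    _ = dint w (n + 1) i * C := mul_comm _ _

lemma jointA2_of_squareFunctionBound (hv : IsWeight v) (hw : IsWeight w) (hC : 0 ≤ C)
    (hbd : SquareFunctionBound v w C) : JointA2 v w C := by
  intro n k hk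
  obtain ⟨g, hgm, hgw⟩ := hw.1.aestronglyMeasurable
  have hL := two_mul_davg_child_mul_davg_le hv hw hC hbd hgm.measurable hgw hk (.inl rfl)
  have hR := two_mul_davg_child_mul_davg_le hv hw hC hbd hgm.measurable hgw hk (.inr rfl)
  have hsplit : (davg w (n + 1) (2 * k) + davg w (n + 1) (2 * k + 1)) * davg v n k =
      2 * (davg v n k * davg w n k) := by
    simp only [davg_eq_two_pow_mul_dint]
    rw [isDyadicAdditive_dint hw.1 n k hk]
    ring
  linarith

end Necessity

/-- Splitting `φ_L - φ_R = E (m_L - m_R) + m_L (φ_L/m_L - E) - m_R (φ_R/m_R - E)` with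
`E = φ/m`: the first term is controlled by the Carleson condition, the others by `A₂`. -/
lemma sq_mul_sub_mul_le {c σ A mL mR φL φR : ℝ} (hmL : 0 < mL) (hmR : 0 < mR) (hσ : 0 ≤ σ)
    (hA : c ^ 2 * σ * (mL + mR) ≤ 4 * A) :
    (c * (φL - φR)) ^ 2 * σ ≤
      3 * ((c * (mL - mR)) ^ 2 * σ * ((φL + φR) / (mL + mR)) ^ 2) +
        12 * A * (mL * (φL / mL - (φL + φR) / (mL + mR)) ^ 2 +
          mR * (φR / mR - (φL + φR) / (mL + mR)) ^ 2) := by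
  set E := (φL + φR) / (mL + mR)
  set a := c * (mL - mR) * E
  set b := c * mL * (φL / mL - E)
  set d := c * mR * (φR / mR - E)
  have hid : c * (φL - φR) = a + b - d := by
    simp only [a, b, d]
    field_simp
    ring
  have hsq : (a + b - d) ^ 2 ≤ 3 * (a ^ 2 + b ^ 2 + d ^ 2) := by
    nlinarith [sq_nonneg (a - b), sq_nonneg (a + d), sq_nonneg (b + d)]
  have hcσ : 0 ≤ c ^ 2 * σ := mul_nonneg (sq_nonneg c) hσ
  have hcL : c ^ 2 * σ * mL ≤ 4 * A := by nlinarith [mul_nonneg hcσ hmR.le]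
  have hcR : c ^ 2 * σ * mR ≤ 4 * A := by nlinarith [mul_nonneg hcσ hmL.le]
  have hb : b ^ 2 * σ ≤ 4 * A * (mL * (φL / mL - E) ^ 2) := by
    have : b ^ 2 * σ = c ^ 2 * σ * mL * (mL * (φL / mL - E) ^ 2) := by ring
    rw [this]
    exact mul_le_mul_of_nonneg_right hcL (by positivity)
  have hd : d ^ 2 * σ ≤ 4 * A * (mR * (φR / mR - E) ^ 2) := by
    have : d ^ 2 * σ = c ^ 2 * σ * mR * (mR * (φR / mR - E) ^ 2) := by ring
    rw [this]
    exact mul_le_mul_of_nonneg_right hcR (by positivity)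
  have ha : a ^ 2 * σ = (c * (mL - mR)) ^ 2 * σ * E ^ 2 := by ring
  rw [hid]
  nlinarith [mul_le_mul_of_nonneg_right hsq hσ]

section Sufficiency

variable {v w f : ℝ → ℝ} {A : ℝ}

lemma avgDiff_sq_mul_le (hv : IsWeight v) (hw : IsWeight w) (hf : IntegrableOn f (Ico 0 1))
    (hA2 : JointA2 v w A) {n k : ℕ} (hk : k < 2 ^ n) :
    avgDiff f n k ^ 2 * dint v n k ≤
      3 * (avgDiff w n k ^ 2 * dint v n k * (dint f n k / dint w n k) ^ 2) +
        12 * A * besselTerm (dint w) (dint f) n k := by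
  have hA : ((2 : ℝ) ^ (n + 1)) ^ 2 * dint v n k * dint w n k ≤ 4 * A := by
    have := hA2 n k hk
    rw [davg_eq_two_pow_mul_dint, davg_eq_two_pow_mul_dint] at this
    calc ((2 : ℝ) ^ (n + 1)) ^ 2 * dint v n k * dint w n k
        = 4 * (2 ^ n * dint v n k * (2 ^ n * dint w n k)) := by ring
      _ ≤ 4 * A := by linarith
  rw [isDyadicAdditive_dint hw.1 n k hk] at hA
  rw [avgDiff_eq, avgDiff_eq, besselTerm, isDyadicAdditive_dint hf n k hk,
    isDyadicAdditive_dint hw.1 n k hk]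
  exact sq_mul_sub_mul_le (hw.dint_pos (two_mul_lt_two_pow_succ hk))
    (hw.dint_pos (two_mul_add_one_lt_two_pow_succ hk)) (hv.dint_pos hk).le hA

lemma sum_dyadicTree_le_of_carlesonCondition (hv : IsWeight v) (hw : IsWeight w) (hA : 0 ≤ A)
    (hCar : CarlesonCondition v w A) {n k : ℕ} (hk : k < 2 ^ n) (d : ℕ) :
    ∑ p ∈ dyadicTree d n k, avgDiff w p.1 p.2 ^ 2 * dint v p.1 p.2 ≤ A * dint w n k := by
  have hnonneg : ∀ p ∈ dyadicTree d n k, 0 ≤ avgDiff w p.1 p.2 ^ 2 * dint v p.1 p.2 :=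
    fun p hp => mul_nonneg (sq_nonneg _) (hv.dint_pos (lt_two_pow_of_mem_dyadicTree hk hp)).le
  rw [← ENNReal.ofReal_le_ofReal_iff (mul_nonneg hA (hw.dint_pos hk).le),
    ENNReal.ofReal_sum_of_nonneg hnonneg, ← davg_mul_dlen, ← mul_assoc]
  refine le_trans ?_ (hCar n k hk)
  refine le_trans (le_of_eq (Finset.sum_congr rfl fun p hp => ?_)) (ENNReal.sum_le_tsum _)
  rw [if_pos (dyad_subset_of_mem_dyadicTree hp), mul_assoc, davg_mul_dlen]

lemma sum_dyadicTree_avgDiff_sq_mul_le (hv : IsWeight v) (hw : IsWeight w) (hfm : Measurable f)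
    (hfw : IntegrableOn (fun x => f x ^ 2 / w x) (Ico 0 1)) (hA : 0 < A) (hA2 : JointA2 v w A)
    (hCar : CarlesonCondition v w A) (d : ℕ) :
    ∑ p ∈ dyadicTree d 0 0, avgDiff f p.1 p.2 ^ 2 * dint v p.1 p.2 ≤
      24 * A * ∫ x in Ico 0 1, f x ^ 2 / w x := by
  have h00 : 0 < 2 ^ 0 := Nat.one_pos
  have hf : IntegrableOn f (Ico 0 1) :=
    integrable_of_integrable_sq_div hfm.aestronglyMeasurable hw.1 hw.2 hfw
  have hdata := isDyadicL2Data_dint hw hfm hfw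
  have hCS := sum_carleson_le hA hdata
    (fun n k hk => mul_nonneg (sq_nonneg _) (hv.dint_pos hk).le)
    (fun n k hk => sum_dyadicTree_le_of_carlesonCondition hv hw hA.le hCar hk) d h00
  have hB := sum_bessel_le hdata d h00
  have hq : 0 ≤ dint f 0 0 ^ 2 / dint w 0 0 := div_nonneg (sq_nonneg _) (hw.dint_pos h00).le
  have hF : ∫ x in Ico 0 1, f x ^ 2 / w x = dint (fun x => f x ^ 2 / w x) 0 0 := by
    rw [dint, dyad_zero_zero]
  calc ∑ p ∈ dyadicTree d 0 0, avgDiff f p.1 p.2 ^ 2 * dint v p.1 p.2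
      ≤ ∑ p ∈ dyadicTree d 0 0, (3 * (avgDiff w p.1 p.2 ^ 2 * dint v p.1 p.2 *
          (dint f p.1 p.2 / dint w p.1 p.2) ^ 2) +
          12 * A * besselTerm (dint w) (dint f) p.1 p.2) :=
        Finset.sum_le_sum fun p hp =>
          avgDiff_sq_mul_le hv hw hf hA2 (lt_two_pow_of_mem_dyadicTree h00 hp)
    _ = 3 * ∑ p ∈ dyadicTree d 0 0, avgDiff w p.1 p.2 ^ 2 * dint v p.1 p.2 *
          (dint f p.1 p.2 / dint w p.1 p.2) ^ 2 +
        12 * A * ∑ p ∈ dyadicTree d 0 0, besselTerm (dint w) (dint f) p.1 p.2 := by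
        rw [Finset.sum_add_distrib, Finset.mul_sum, Finset.mul_sum]
    _ ≤ 24 * A * ∫ x in Ico 0 1, f x ^ 2 / w x := by
        rw [hF]
        nlinarith

lemma tsum_ite_ofReal_le_of_sum_dyadicTree_le {e : ℕ → ℕ → ℝ}
    (he : ∀ n k, k < 2 ^ n → 0 ≤ e n k) {c : ℝ}
    (h : ∀ d, ∑ p ∈ dyadicTree d 0 0, e p.1 p.2 ≤ c) :
    (∑' p : ℕ × ℕ, if p.2 < 2 ^ p.1 then ENNReal.ofReal (e p.1 p.2) else 0) ≤
      ENNReal.ofReal c := by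
  refine ENNReal.summable.tsum_le_of_sum_le fun s => ?_
  have hsub : ∀ p ∈ s, (if p.2 < 2 ^ p.1 then ENNReal.ofReal (e p.1 p.2) else 0) ≠ 0 →
      p ∈ dyadicTree (s.sup Prod.fst + 1) 0 0 := fun p hp hne =>
    mem_dyadicTree_zero_zero (by by_contra h; simp [h] at hne)
      (Nat.lt_succ_of_le (Finset.le_sup (f := Prod.fst) hp))
  refine (Finset.sum_le_sum_of_ne_zero hsub).trans ?_
  rw [Finset.sum_congr rfl fun p hp => if_pos (lt_two_pow_of_mem_dyadicTree Nat.one_pos hp),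
    ← ENNReal.ofReal_sum_of_nonneg fun p hp =>
      he p.1 p.2 (lt_two_pow_of_mem_dyadicTree Nat.one_pos hp)]
  exact ENNReal.ofReal_le_ofReal (h _)

lemma squareFunctionBound_of_jointA2_of_carlesonCondition (hv : IsWeight v) (hw : IsWeight w)
    (hA2 : JointA2 v w A) (hCar : CarlesonCondition v w A) :
    SquareFunctionBound v w (24 * A) := by
  have hA : 0 < A := (mul_pos (hv.davg_pos Nat.one_pos) (hw.davg_pos Nat.one_pos)).trans_le
    (hA2 0 0 Nat.one_pos)
  intro f hfm hfw
  rw [setLIntegral_Ssq_mul hv]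
  exact tsum_ite_ofReal_le_of_sum_dyadicTree_le
    (fun n k hk => mul_nonneg (sq_nonneg _) (hv.dint_pos hk).le)
    (sum_dyadicTree_avgDiff_sq_mul_le hv hw hfm hfw hA hA2 hCar)

end Sufficiency

/-- Theorem 9.1. -/
theorem theorem_9_1 (v w : ℝ → ℝ) (hv : IsWeight v) (hw : IsWeight w) :
    (∃ C : ℝ, 0 ≤ C ∧
        ∀ f : ℝ → ℝ, Measurable f →
          IntegrableOn (fun x => (f x) ^ 2 / w x) (Set.Ico (0 : ℝ) 1) →
          (∫⁻ x in Set.Ico (0 : ℝ) 1, Ssq f x * ENNReal.ofReal (v x)) ≤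
            ENNReal.ofReal (C * ∫ x in Set.Ico (0 : ℝ) 1, (f x) ^ 2 / w x)) ↔
      (∃ A : ℝ, 0 ≤ A ∧
        (∀ n k : ℕ, k < 2 ^ n → davg v n k * davg w n k ≤ A) ∧
        (∀ m j : ℕ, j < 2 ^ m →
          (∑' p : ℕ × ℕ,
              if dyad p.1 p.2 ⊆ dyad m j then
                ENNReal.ofReal
                  ((davg w (p.1 + 1) (2 * p.2) - davg w (p.1 + 1) (2 * p.2 + 1)) ^ 2 *
                    davg v p.1 p.2 * dlen p.1)
              else 0) ≤
            ENNReal.ofReal (A * davg w m j * dlen m))) := by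
  constructor
  · rintro ⟨C, hC, hbd⟩
    exact ⟨C, hC, jointA2_of_squareFunctionBound hv hw hC hbd,
      carlesonCondition_of_squareFunctionBound hv hw hbd⟩
  · rintro ⟨A, hA, hA2, hCar⟩
    exact ⟨24 * A, by positivity,
      squareFunctionBound_of_jointA2_of_carlesonCondition hv hw hA2 hCar⟩

end
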